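/- arXiv:2005.08477 — 4 statements merged into one kernel-verified Lean document; each statement's English description precedes it below -/
import Mathlib

section
/- Let E and X be partially ordered sets with X nonempty. If the poset E^X is connected, then 𝒞(E^X) = E^X, i.e., every f ∈ E^X lies in the same connected component of E^X as some map that is constant on each connected component of X. -/
/-- A poset is connected if it is nonempty and any two elements are related by the
equivalence relation generated by `≤`. -/
def PosetConnected (P : Type*) [PartialOrder P] : Prop :=
  Nonempty P ∧ ∀ a b : P, Relation.EqvGen (· ≤ ·) a b

/-- `g : X →o E` is constant on each connected component of `X`. -/
def ConstOnComponents {X E : Type*} [PartialOrder X] [PartialOrder E] (g : X →o E) : Prop :=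
  ∀ x y : X, Relation.EqvGen (· ≤ ·) x y → g x = g y

/-- `𝒞(E^X)`: the set of `f ∈ E^X` lying in the same connected component of `E^X`
as some map constant on each connected component of `X`. -/
def CSet (E X : Type*) [PartialOrder E] [PartialOrder X] : Set (X →o E) :=
  {f | ∃ g : X →o E, ConstOnComponents g ∧ Relation.EqvGen (· ≤ ·) f g}

/-- Lemma 2: if `E^X` is connected (and `X` is nonempty), then `𝒞(E^X) = E^X`. -/
theorem stmt1 (E X : Type*) [PartialOrder E] [PartialOrder X] (hX : Nonempty X)
    (h : PosetConnected (X →o E)) : CSet E X = Set.univ := by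
  obtain ⟨⟨f₀⟩, hconn⟩ := h
  obtain ⟨x₀⟩ := hX
  ext f
  simp only [Set.mem_univ, iff_true]
  refine ⟨OrderHom.const X (f₀ x₀), ?_, hconn _ _⟩
  intro x y _
  rfl
end

section
/- Let S, P, Q, and R be partially ordered sets with Q, R, and S nonempty, and suppose P is order-isomorphic to 𝒞(Q^R). Then Q^S is order-isomorphic to a retract of P^S: there exist a subset J of P^S and a retraction τ : P^S → J with J order-isomorphic to Q^S. -/
/-- Proposition 4 (first part): if `P ≅ 𝒞(Q^R)` with `Q, R, S` nonempty, then `Q^S` is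
order-isomorphic to a retract of `P^S`. -/
theorem stmt3 (S P Q R : Type*) [PartialOrder S] [PartialOrder P] [PartialOrder Q]
    [PartialOrder R] (hQ : Nonempty Q) (hR : Nonempty R) (hS : Nonempty S)
    (hP : Nonempty (P ≃o CSet Q R)) :
    ∃ (J : Set (S →o P)) (τ : (S →o P) →o (S →o P)),
      (∀ f : S →o P, τ f ∈ J) ∧ (∀ f ∈ J, τ f = f) ∧ Nonempty (J ≃o (S →o Q)) := by
  obtain ⟨e⟩ := hP
  obtain ⟨r₀⟩ := hR
  -- constant maps lie in CSet
  have hconst : ∀ q : Q, (OrderHom.const R q : R →o Q) ∈ CSet Q R := fun q =>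
    ⟨OrderHom.const R q, fun x y _ => rfl, Relation.EqvGen.refl _⟩
  -- embedding Q → P
  let i : Q →o P :=
    { toFun := fun q => e.symm ⟨OrderHom.const R q, hconst q⟩
      monotone' := fun a b hab => e.symm.monotone (by exact fun r => hab) }
  -- projection P → Q
  let p : P →o Q :=
    { toFun := fun x => (e x : R →o Q) r₀
      monotone' := fun a b hab => (e.monotone hab) r₀ }
  have hpi : ∀ q : Q, p (i q) = q := by
    intro q
    show (e (e.symm ⟨OrderHom.const R q, hconst q⟩) : R →o Q) r₀ = q
    rw [e.apply_symm_apply]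
    rfl
  -- the retraction on S →o P
  let τ : (S →o P) →o (S →o P) :=
    { toFun := fun f => (i.comp p).comp f
      monotone' := fun f g h s => i.monotone (p.monotone (h s)) }
  refine ⟨{f | τ f = f}, τ, ?_, fun f hf => hf, ⟨?_⟩⟩
  · intro f
    show τ (τ f) = τ f
    ext s
    exact congrArg i (hpi _)
  · refine
      { toFun := fun f => p.comp f.1
        invFun := fun q => ⟨i.comp q, by ext s; exact congrArg i (hpi _)⟩
        left_inv := ?_
        right_inv := ?_
        map_rel_iff' := ?_ }
    · rintro ⟨f, hf⟩
      ext s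
      exact congrFun (congrArg (⇑) hf) s
    · intro q
      ext s
      exact hpi _
    · rintro ⟨f, hf⟩ ⟨g, hg⟩
      constructor
      · intro h s
        have hf' : i (p (f s)) = f s := congrFun (congrArg (⇑) hf) s
        have hg' : i (p (g s)) = g s := congrFun (congrArg (⇑) hg) s
        calc f s = i (p (f s)) := hf'.symm
          _ ≤ i (p (g s)) := i.monotone (h s)
          _ = g s := hg'
      · intro h s
        exact p.monotone (h s)
end

section
/- Let S, P, Q, and R be partially ordered sets with Q, R, and S nonempty, and suppose P is order-isomorphic to 𝒞(Q^R). If P^S is connected, then Q^S is connected. -/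
lemma eqvGenMap {A B : Type*} [Preorder A] [Preorder B] (Φ : A →o B) {a b : A}
    (h : Relation.EqvGen (· ≤ ·) a b) : Relation.EqvGen (· ≤ ·) (Φ a) (Φ b) := by
  induction h with
  | rel x y hxy => exact Relation.EqvGen.rel _ _ (Φ.monotone hxy)
  | refl x => exact Relation.EqvGen.refl _
  | symm x y _ ih => exact Relation.EqvGen.symm _ _ ih
  | trans x y z _ _ ih1 ih2 => exact Relation.EqvGen.trans _ _ _ ih1 ih2

/-- Proposition 4 (second part): if `P ≅ 𝒞(Q^R)` with `Q, R, S` nonempty and `P^S` is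
connected, then `Q^S` is connected. -/
theorem stmt4 (S P Q R : Type*) [PartialOrder S] [PartialOrder P] [PartialOrder Q]
    [PartialOrder R] (hQ : Nonempty Q) (hR : Nonempty R) (hS : Nonempty S)
    (hP : Nonempty (P ≃o CSet Q R)) (h : PosetConnected (S →o P)) :
    PosetConnected (S →o Q) := by
  obtain ⟨e⟩ := hP
  obtain ⟨r₀⟩ := hR
  -- q ↦ constant map, viewed in CSet
  have hconst : ∀ q : Q, (OrderHom.const R q : R →o Q) ∈ CSet Q R := fun q =>
    ⟨OrderHom.const R q, fun _ _ _ => rfl, Relation.EqvGen.refl _⟩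
  set φ : Q →o P :=
    ⟨fun q => e.symm ⟨OrderHom.const R q, hconst q⟩,
     fun a b hab => e.symm.monotone (by exact fun r => hab)⟩ with hφ
  set ψ : P →o Q :=
    ⟨fun p => (e p).val r₀, fun a b hab => (e.monotone hab) r₀⟩ with hψ
  have hψφ : ∀ q : Q, ψ (φ q) = q := by
    intro q
    simp only [hφ, hψ, OrderHom.coe_mk]
    exact congrArg (fun x : CSet Q R => x.val r₀) (e.apply_symm_apply ⟨OrderHom.const R q, hconst q⟩)
  set Ψ : (S →o P) →o (S →o Q) :=
    ⟨fun H => ψ.comp H, fun a b hab s => ψ.monotone (hab s)⟩ with hΨ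
  constructor
  · exact ⟨OrderHom.const S (Classical.arbitrary Q)⟩
  · intro f g
    have key := eqvGenMap Ψ (h.2 (φ.comp f) (φ.comp g))
    have hf : Ψ (φ.comp f) = f := by ext s; exact hψφ (f s)
    have hg : Ψ (φ.comp g) = g := by ext s; exact hψφ (g s)
    rwa [hf, hg] at key
end

section
/- Let A, C, and U, S be posets with A connected and nonempty, where U + S denotes the disjoint-union (direct sum) poset of U and S. Then (U + S)^A is order-isomorphic to U^A + S^A. -/
lemma sum_le_side {U S : Type*} [PartialOrder U] [PartialOrder S] {a b : U ⊕ S}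
    (h : a ≤ b) : a.isLeft = b.isLeft := by
  cases a <;> cases b
  · rfl
  · exact absurd h Sum.not_inl_le_inr
  · exact absurd h Sum.not_inr_le_inl
  · rfl

lemma sumSideConst {A U S : Type*} [PartialOrder A] [PartialOrder U] [PartialOrder S]
    (f : A →o U ⊕ S) {x y : A} (h : Relation.EqvGen (· ≤ ·) x y) :
    (f x).isLeft = (f y).isLeft := by
  induction h with
  | rel a b hab => exact sum_le_side (f.monotone hab)
  | refl => rfl
  | symm _ _ _ ih => exact ih.symm
  | trans _ _ _ _ _ ih1 ih2 => exact ih1.trans ih2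

lemma getLeft_le {U S : Type*} [PartialOrder U] [PartialOrder S] {a b : U ⊕ S}
    (h : a ≤ b) (ha : a.isLeft) (hb : b.isLeft) : a.getLeft ha ≤ b.getLeft hb := by
  cases a <;> cases b
  · simpa using Sum.inl_le_inl_iff.mp h
  · simp at hb
  · simp at ha
  · simp at ha

lemma getRight_le {U S : Type*} [PartialOrder U] [PartialOrder S] {a b : U ⊕ S}
    (h : a ≤ b) (ha : a.isRight) (hb : b.isRight) : a.getRight ha ≤ b.getRight hb := by
  cases a <;> cases b
  · simp at ha
  · simp at ha
  · simp at hb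
  · simpa using Sum.inr_le_inr_iff.mp h

/-- If `A` is connected and nonempty, then `(U + S)^A ≅ U^A + S^A`, where `+` is the
disjoint-union (direct sum) order. -/
theorem stmt9 (A U S : Type*) [PartialOrder A] [PartialOrder U] [PartialOrder S]
    (hA : PosetConnected A) :
    Nonempty ((A →o U ⊕ S) ≃o ((A →o U) ⊕ (A →o S))) := by
  classical
  obtain ⟨⟨a₀⟩, hconn⟩ := hA
  -- side is constant
  have side : ∀ (f : A →o U ⊕ S) (x : A), (f x).isLeft = (f a₀).isLeft := fun f x =>
    sumSideConst f (hconn x a₀)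
  set Φ : (A →o U ⊕ S) → (A →o U) ⊕ (A →o S) := fun f =>
    if h : (f a₀).isLeft then
      Sum.inl ⟨fun x => (f x).getLeft ((side f x).trans (by simp [h])),
        fun x y hxy => getLeft_le (f.monotone hxy) _ _⟩
    else
      Sum.inr ⟨fun x => (f x).getRight (by
        have := side f x
        cases hx : f x <;> cases h0 : f a₀ <;> simp_all),
        fun x y hxy => getRight_le (f.monotone hxy) _ _⟩
    with hΦ
  set Ψ : (A →o U) ⊕ (A →o S) → (A →o U ⊕ S) := fun g =>
    Sum.elim
      (fun g => ⟨fun x => Sum.inl (g x), fun x y hxy => Sum.inl_le_inl_iff.mpr (g.monotone hxy)⟩)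
      (fun g => ⟨fun x => Sum.inr (g x), fun x y hxy => Sum.inr_le_inr_iff.mpr (g.monotone hxy)⟩)
      g with hΨ
  have li : Function.LeftInverse Ψ Φ := by
    intro f
    by_cases h : (f a₀).isLeft
    · simp only [hΦ, dif_pos h, hΨ, Sum.elim_inl]
      ext x
      exact Sum.inl_getLeft _ _
    · simp only [hΦ, dif_neg h, hΨ, Sum.elim_inr]
      ext x
      exact Sum.inr_getRight _ _
  have ri : Function.RightInverse Ψ Φ := by
    intro g
    cases g with
    | inl g =>
      simp only [hΨ, Sum.elim_inl, hΦ]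
      rw [dif_pos (by exact rfl)]
      congr 1
    | inr g =>
      simp only [hΨ, Sum.elim_inr, hΦ]
      rw [dif_neg (by simp; rfl)]
      congr 1
  have monΦ : Monotone Φ := by
    intro f f' hff
    have hside : (f a₀).isLeft = (f' a₀).isLeft := sum_le_side (hff a₀)
    by_cases h : (f a₀).isLeft
    · have h' : (f' a₀).isLeft = true := hside ▸ h
      simp only [hΦ, dif_pos h, dif_pos h']
      exact Sum.inl_le_inl_iff.mpr fun x => getLeft_le (hff x) _ _
    · have h' : ¬ (f' a₀).isLeft = true := fun hh => h (hside ▸ hh)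
      simp only [hΦ, dif_neg h, dif_neg h']
      exact Sum.inr_le_inr_iff.mpr fun x => getRight_le (hff x) _ _
  have monΨ : Monotone Ψ := by
    rintro (g | g) (g' | g') hgg
    · exact fun x => Sum.inl_le_inl_iff.mpr ((Sum.inl_le_inl_iff.mp hgg) x)
    · exact absurd hgg Sum.not_inl_le_inr
    · exact absurd hgg Sum.not_inr_le_inl
    · exact fun x => Sum.inr_le_inr_iff.mpr ((Sum.inr_le_inr_iff.mp hgg) x)
  exact ⟨Equiv.toOrderIso ⟨Φ, Ψ, li, ri⟩ monΦ monΨ⟩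
end
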